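/- arXiv:2405.19064 — 2 statements merged into one kernel-verified Lean document; each statement's English description precedes it below -/
import Mathlib

section
/- Let H : [τ, 0) → ℝ be a smooth positive function with H(t) → ∞ as t → 0⁻, satisfying (1/(2n)) H(t)³ ≤ H'(t) ≤ 2 H(t)³ for all t ∈ [τ, 0). Then for all t ∈ [τ, 0), sqrt(1/(-4t)) ≤ H(t) ≤ sqrt(n/(-t)). -/
/-!
With `G = H⁻²` the differential inequality becomes `-4 ≤ G' ≤ -1/n`, and `G(t) → 0` as `t → 0⁻`.
Integrating from `t` to `0` gives `-t/n ≤ G(t) ≤ -4t`, which is the claim after inverting and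
taking square roots.
-/

open Set Filter Topology

theorem AntitoneOn.le_of_tendsto_nhdsLT {f : ℝ → ℝ} {a b L t : ℝ} (hf : AntitoneOn f (Ico a b))
    (hlim : Tendsto f (𝓝[<] b) (𝓝 L)) (ht : t ∈ Ico a b) : L ≤ f t := by
  refine le_of_tendsto hlim ?_
  filter_upwards [Ioo_mem_nhdsLT ht.2] with s hs
  exact hf ht ⟨ht.1.trans hs.1.le, hs.2⟩ hs.1.le

theorem sub_mul_le_of_deriv_le_of_tendsto {f f' : ℝ → ℝ} {a b C L t : ℝ}
    (hf : ∀ x ∈ Ico a b, HasDerivAt f (f' x) x) (hf' : ∀ x ∈ Ico a b, f' x ≤ C)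
    (hlim : Tendsto f (𝓝[<] b) (𝓝 L)) (ht : t ∈ Ico a b) : L - C * (b - t) ≤ f t := by
  have hg : ∀ x ∈ Ico a b, HasDerivAt (fun x => f x - C * x) (f' x - C) x := fun x hx => by
    simpa using (hf x hx).fun_sub ((hasDerivAt_id' x).const_mul C)
  have hanti : AntitoneOn (fun x => f x - C * x) (Ico a b) := by
    refine antitoneOn_of_hasDerivWithinAt_nonpos (f' := fun x => f' x - C) (convex_Ico a b)
      (fun x hx => (hg x hx).continuousAt.continuousWithinAt) (fun x hx => ?_) (fun x hx => ?_)
    all_goals rw [interior_Ico] at hx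
    · exact (hg x (Ioo_subset_Ico_self hx)).hasDerivWithinAt
    · linarith [hf' x (Ioo_subset_Ico_self hx)]
  have hglim : Tendsto (fun x => f x - C * x) (𝓝[<] b) (𝓝 (L - C * b)) :=
    hlim.sub ((continuous_const_mul C).continuousWithinAt.tendsto)
  linarith [hanti.le_of_tendsto_nhdsLT hglim ht]

theorem le_sub_mul_of_le_deriv_of_tendsto {f f' : ℝ → ℝ} {a b C L t : ℝ}
    (hf : ∀ x ∈ Ico a b, HasDerivAt f (f' x) x) (hf' : ∀ x ∈ Ico a b, C ≤ f' x)
    (hlim : Tendsto f (𝓝[<] b) (𝓝 L)) (ht : t ∈ Ico a b) : f t ≤ L - C * (b - t) := by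
  have := sub_mul_le_of_deriv_le_of_tendsto (fun x hx => (hf x hx).fun_neg)
    (fun x hx => neg_le_neg (hf' x hx)) hlim.neg ht
  linarith

theorem HasDerivAt.inv_sq {H : ℝ → ℝ} {h t : ℝ} (hH : HasDerivAt H h t) (ht : H t ≠ 0) :
    HasDerivAt (fun s => (H s ^ 2)⁻¹) (-2 * h / H t ^ 3) t :=
  ((hH.fun_pow 2).fun_inv (pow_ne_zero 2 ht)).congr_deriv (by field_simp; ring)

theorem Real.sqrt_inv_le_of_inv_sq_le {x y : ℝ} (hx : 0 < x) (h : (x ^ 2)⁻¹ ≤ y) :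
    √y⁻¹ ≤ x := by
  have hy : 0 < y := (inv_pos.mpr (pow_pos hx 2)).trans_le h
  rw [Real.sqrt_le_left hx.le, inv_le_comm₀ hy (pow_pos hx 2)]
  exact h

theorem Real.le_sqrt_inv_of_le_inv_sq {x y : ℝ} (hx : 0 < x) (hy : 0 < y) (h : y ≤ (x ^ 2)⁻¹) :
    x ≤ √y⁻¹ := by
  rw [Real.le_sqrt hx.le (inv_pos.mpr hy).le, le_inv_comm₀ (pow_pos hx 2) hy]
  exact h

theorem stmt_5_general (n : ℕ) (hn : 1 ≤ n) (τ : ℝ) (H H' : ℝ → ℝ)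
    (hpos : ∀ t ∈ Set.Ico τ 0, 0 < H t)
    (hderiv : ∀ t ∈ Set.Ico τ 0, HasDerivAt H (H' t) t)
    (hlower : ∀ t ∈ Set.Ico τ 0, (1/(2*(n:ℝ))) * (H t)^3 ≤ H' t)
    (hupper : ∀ t ∈ Set.Ico τ 0, H' t ≤ 2 * (H t)^3)
    (hlim : Tendsto H (nhdsWithin 0 (Set.Iio 0)) atTop) :
    ∀ t ∈ Set.Ico τ 0,
      Real.sqrt (1/(-4*t)) ≤ H t ∧ H t ≤ Real.sqrt ((n:ℝ)/(-t)) := by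
  have hn0 : (0 : ℝ) < n := by exact_mod_cast hn
  have hG : ∀ t ∈ Ico τ 0, HasDerivAt (fun s => (H s ^ 2)⁻¹) (-2 * H' t / H t ^ 3) t :=
    fun t ht => (hderiv t ht).inv_sq (hpos t ht).ne'
  have hG_ge : ∀ t ∈ Ico τ 0, -4 ≤ -2 * H' t / H t ^ 3 := fun t ht => by
    rw [le_div_iff₀ (pow_pos (hpos t ht) 3)]
    linarith [hupper t ht]
  have hG_le : ∀ t ∈ Ico τ 0, -2 * H' t / H t ^ 3 ≤ -(1 / n) := fun t ht => by
    have := hlower t ht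
    rw [div_le_iff₀ (pow_pos (hpos t ht) 3)]
    field_simp at this ⊢
    linarith
  have hGlim : Tendsto (fun s => (H s ^ 2)⁻¹) (𝓝[<] 0) (𝓝 0) :=
    ((tendsto_pow_atTop two_ne_zero).comp hlim).inv_tendsto_atTop
  intro t ht
  have hupp := le_sub_mul_of_le_deriv_of_tendsto hG hG_ge hGlim ht
  have hlow := sub_mul_le_of_deriv_le_of_tendsto hG hG_le hGlim ht
  have hlow_eq : 0 - -(1 / n) * (0 - t) = -t / n := by ring
  refine ⟨?_, ?_⟩
  · rw [one_div]
    exact Real.sqrt_inv_le_of_inv_sq_le (hpos t ht) (by linarith)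
  · rw [← inv_div]
    exact Real.le_sqrt_inv_of_le_inv_sq (hpos t ht) (div_pos (by linarith [ht.2]) hn0)
      (by linarith)

theorem stmt_5 (n : ℕ) (hn : 1 ≤ n) (τ : ℝ) (hτ : τ < 0) (H H' : ℝ → ℝ)
    (hpos : ∀ t ∈ Set.Ico τ 0, 0 < H t)
    (hderiv : ∀ t ∈ Set.Ico τ 0, HasDerivAt H (H' t) t)
    (hlower : ∀ t ∈ Set.Ico τ 0, (1/(2*(n:ℝ))) * (H t)^3 ≤ H' t)
    (hupper : ∀ t ∈ Set.Ico τ 0, H' t ≤ 2 * (H t)^3)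
    (hlim : Tendsto H (nhdsWithin 0 (Set.Iio 0)) atTop) :
    ∀ t ∈ Set.Ico τ 0,
      Real.sqrt (1/(-4*t)) ≤ H t ∧ H t ≤ Real.sqrt ((n:ℝ)/(-t)) :=
  stmt_5_general n hn τ H H' hpos hderiv hlower hupper hlim
end

section
/- Let γ : [τ, 0) → ℝ^(n+1) be a C¹ curve with γ(t) → 0 as t → 0⁻ and |γ'(t)| ≤ sqrt(n/(-t)) for all t. Let Π_axis : ℝ^(n+1) → ℝ^(n+1) be an orthogonal projection. If |Π_axis(γ'(t))| / |γ'(t)| → 0 as t → 0⁻ (with γ'(t) ≠ 0), then |Π_axis(γ(t))| / sqrt(-t) → 0 as t → 0⁻. -/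
open Set Filter Metric Topology

/-!
Write `f = Π_axis ∘ γ`. The angle hypothesis together with the speed bound gives, for every
`δ > 0`, the bound `‖f' s‖ ≤ δ / √(-s)` near `0⁻`. Since `-2δ√(-s)` has derivative `δ / √(-s)`,
the mean value inequality yields `‖f t - f t'‖ ≤ 2δ (√(-t) - √(-t'))` for `t ≤ t' < 0`, and letting
`t' → 0⁻`, where `f t' → 0`, gives `‖f t‖ ≤ 2δ √(-t)`.
-/

section

variable {E : Type*} [NormedAddCommGroup E] [NormedSpace ℝ E]

theorem norm_image_sub_le_sub_of_norm_deriv_le_deriv {f f' : ℝ → E} {g g' : ℝ → ℝ} {a b : ℝ}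
    (hab : a ≤ b) (hf : ∀ x ∈ Icc a b, HasDerivAt f (f' x) x)
    (hg : ∀ x ∈ Icc a b, HasDerivAt g (g' x) x) (bound : ∀ x ∈ Ico a b, ‖f' x‖ ≤ g' x) :
    ‖f b - f a‖ ≤ g b - g a := by
  refine image_norm_le_of_norm_deriv_right_le_deriv_boundary' (f := fun x => f x - f a)
    (B := fun x => g x - g a) ?_ (fun x hx => ?_) (by simp) ?_ (fun x hx => ?_) bound
    (right_mem_Icc.2 hab)
  · exact fun x hx => ((hf x hx).continuousAt.sub continuousAt_const).continuousWithinAt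
  · exact ((hf x (Ico_subset_Icc_self hx)).sub_const _).hasDerivWithinAt
  · exact fun x hx => ((hg x hx).continuousAt.sub continuousAt_const).continuousWithinAt
  · exact ((hg x (Ico_subset_Icc_self hx)).sub_const _).hasDerivWithinAt

theorem hasDerivAt_mul_sqrt_neg (C : ℝ) {s : ℝ} (hs : s < 0) :
    HasDerivAt (fun x => -(2 * C) * √(-x)) (C / √(-s)) s := by
  refine (((hasDerivAt_neg s).sqrt (neg_ne_zero.2 hs.ne)).const_mul (-(2 * C))).congr_deriv ?_
  have : √(-s) ≠ 0 := (Real.sqrt_pos.2 (neg_pos.2 hs)).ne'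
  field_simp

theorem eventually_norm_le_of_norm_deriv_le_div_sqrt_neg {f f' : ℝ → E} {C : ℝ}
    (hf : ∀ᶠ s in 𝓝[<] 0, HasDerivAt f (f' s) s)
    (hbound : ∀ᶠ s in 𝓝[<] 0, ‖f' s‖ ≤ C / √(-s)) (hlim : Tendsto f (𝓝[<] 0) (𝓝 0)) :
    ∀ᶠ t in 𝓝[<] 0, ‖f t‖ ≤ 2 * C * √(-t) := by
  obtain ⟨a, ha, hsub⟩ := mem_nhdsLT_iff_exists_Ioo_subset.1 (hf.and hbound)
  filter_upwards [Ioo_mem_nhdsLT ha] with t ht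
  have hincr : ∀ t' ∈ Ioo t 0, ‖f t' - f t‖ ≤ 2 * C * (√(-t) - √(-t')) := by
    intro t' ht'
    have hIcc : Icc t t' ⊆ Ioo a 0 := fun s hs => ⟨ht.1.trans_le hs.1, hs.2.trans_lt ht'.2⟩
    have := norm_image_sub_le_sub_of_norm_deriv_le_deriv ht'.1.le
      (fun s hs => (hsub (hIcc hs)).1) (fun s hs => hasDerivAt_mul_sqrt_neg C (hIcc hs).2)
      (fun s hs => (hsub (hIcc (Ico_subset_Icc_self hs))).2)
    linarith
  have hsqrt : Tendsto (fun t' : ℝ => √(-t')) (𝓝[<] 0) (𝓝 0) :=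
    (continuous_neg.sqrt.tendsto' 0 0 (by simp)).mono_left nhdsWithin_le_nhds
  have hupper : Tendsto (fun t' => ‖f t'‖ + 2 * C * (√(-t) - √(-t'))) (𝓝[<] 0)
      (𝓝 (2 * C * √(-t))) := by
    simpa using hlim.norm.add ((tendsto_const_nhds.sub hsqrt).const_mul (2 * C))
  refine ge_of_tendsto hupper ?_
  filter_upwards [Ioo_mem_nhdsLT ht.2] with t' ht'
  linarith [norm_le_norm_add_norm_sub (f t') (f t), hincr t' ht']

theorem tendsto_norm_div_sqrt_neg_of_norm_deriv_le {f f' : ℝ → E}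
    (hf : ∀ᶠ s in 𝓝[<] 0, HasDerivAt f (f' s) s)
    (hbound : ∀ δ > 0, ∀ᶠ s in 𝓝[<] 0, ‖f' s‖ ≤ δ / √(-s)) (hlim : Tendsto f (𝓝[<] 0) (𝓝 0)) :
    Tendsto (fun t => ‖f t‖ / √(-t)) (𝓝[<] 0) (𝓝 0) := by
  rw [NormedAddGroup.tendsto_nhds_zero]
  intro ε hε
  have hδ : ∀ᶠ t in 𝓝[<] 0, ‖f t‖ ≤ 2 * (ε / 4) * √(-t) :=
    eventually_norm_le_of_norm_deriv_le_div_sqrt_neg hf (hbound (ε / 4) (by positivity)) hlim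
  filter_upwards [hδ, self_mem_nhdsWithin] with t ht (ht0 : t < 0)
  have hsqrt : 0 < √(-t) := Real.sqrt_pos.2 (neg_pos.2 ht0)
  rw [Real.norm_of_nonneg (by positivity), div_lt_iff₀ hsqrt]
  nlinarith

end

theorem ContinuousLinearMap.norm_apply_le_of_norm_apply_div_norm_le {𝕜 E F : Type*}
    [NontriviallyNormedField 𝕜] [NormedAddCommGroup E] [NormedSpace 𝕜 E] [NormedAddCommGroup F]
    [NormedSpace 𝕜 F] (P : E →L[𝕜] F) {v : E} {δ : ℝ} (h : ‖P v‖ / ‖v‖ ≤ δ) :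
    ‖P v‖ ≤ δ * ‖v‖ := by
  rcases eq_or_ne v 0 with rfl | hv
  · simp
  · exact (div_le_iff₀ (norm_pos_iff.2 hv)).1 h

theorem stmt_7_general (n : ℕ) (τ : ℝ) (hτ : τ < 0)
    (γ γ' : ℝ → EuclideanSpace ℝ (Fin (n+1)))
    (P : EuclideanSpace ℝ (Fin (n+1)) →L[ℝ] EuclideanSpace ℝ (Fin (n+1)))
    (hderiv : ∀ t ∈ Set.Ico τ 0, HasDerivAt γ (γ' t) t)
    (hlim : Tendsto γ (nhdsWithin 0 (Set.Iio 0)) (nhds 0))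
    (hspeed : ∀ t ∈ Set.Ico τ 0, ‖γ' t‖ ≤ Real.sqrt ((n:ℝ)/(-t)))
    (hax : Tendsto (fun t => ‖P (γ' t)‖ / ‖γ' t‖) (nhdsWithin 0 (Set.Iio 0))
      (nhds 0)) :
    Tendsto (fun t => ‖P (γ t)‖ / Real.sqrt (-t)) (nhdsWithin 0 (Set.Iio 0))
      (nhds 0) := by
  refine tendsto_norm_div_sqrt_neg_of_norm_deriv_le (f' := fun t => P (γ' t)) ?_ (fun δ hδ => ?_)
    ((P.continuous.tendsto' 0 0 P.map_zero).comp hlim)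
  · filter_upwards [Ico_mem_nhdsLT hτ] with s hs
    exact P.hasFDerivAt.comp_hasDerivAt s (hderiv s hs)
  · have hδ' : 0 < δ / (√n + 1) := by positivity
    filter_upwards [Ico_mem_nhdsLT hτ, hax.eventually (ge_mem_nhds hδ')] with s hs hangle
    calc ‖P (γ' s)‖ ≤ δ / (√n + 1) * ‖γ' s‖ := P.norm_apply_le_of_norm_apply_div_norm_le hangle
      _ ≤ δ / (√n + 1) * (√n / √(-s)) := by
        gcongr
        simpa [Real.sqrt_div (Nat.cast_nonneg n)] using hspeed s hs
      _ ≤ δ / √(-s) := by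
        rw [← mul_div_assoc]
        gcongr
        rw [div_mul_eq_mul_div, div_le_iff₀ (by positivity)]
        nlinarith [Real.sqrt_nonneg (n : ℝ)]

theorem stmt_7 (n : ℕ) (τ : ℝ) (hτ : τ < 0)
    (γ γ' : ℝ → EuclideanSpace ℝ (Fin (n+1)))
    (P : EuclideanSpace ℝ (Fin (n+1)) →L[ℝ] EuclideanSpace ℝ (Fin (n+1)))
    (hidem : ∀ x, P (P x) = P x)
    (hselfadj : ∀ x y, (inner ℝ (P x) y : ℝ) = (inner ℝ x (P y) : ℝ))
    (hderiv : ∀ t ∈ Set.Ico τ 0, HasDerivAt γ (γ' t) t)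
    (hcont : ContinuousOn γ' (Set.Ico τ 0))
    (hne : ∀ t ∈ Set.Ico τ 0, γ' t ≠ 0)
    (hlim : Tendsto γ (nhdsWithin 0 (Set.Iio 0)) (nhds 0))
    (hspeed : ∀ t ∈ Set.Ico τ 0, ‖γ' t‖ ≤ Real.sqrt ((n:ℝ)/(-t)))
    (hax : Tendsto (fun t => ‖P (γ' t)‖ / ‖γ' t‖) (nhdsWithin 0 (Set.Iio 0))
      (nhds 0)) :
    Tendsto (fun t => ‖P (γ t)‖ / Real.sqrt (-t)) (nhdsWithin 0 (Set.Iio 0))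
      (nhds 0) :=
  stmt_7_general n τ hτ γ γ' P hderiv hlim hspeed hax
end
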